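/- Let (w*, b*, u*) be a P-stationary point with parameter γ > 0 and associated multiplier λ* ∈ ℝ^m, and define the index set T* = {i : 0 < u*_i − γλ*_i ≤ √(2γC)}. Then w* admits the support-vector representation w* = Σ_{i ∈ T*} (−λ*_i) y_i x_i; that is, w* is a linear combination of only the training vectors x_i with i ∈ T*. -/

import Mathlib

open Finset

noncomputable def l01norm {m : ℕ} (v : Fin m → ℝ) : ℕ :=
  (Finset.univ.filter fun i => 0 < v i).card

/-- `(w, b, u)` is a P-stationary point with parameter `γ > 0` and multiplier
`lam` of the problem `min (1/2)‖w‖² + C‖u₊‖₀ s.t. u + Aw + by = 1`. -/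
def IsPStationary {m n : ℕ} (A : Matrix (Fin m) (Fin n) ℝ) (y : Fin m → ℝ)
    (C γ : ℝ) (w : Fin n → ℝ) (b : ℝ) (u : Fin m → ℝ) (lam : Fin m → ℝ) : Prop :=
  (∀ j, w j + ∑ i, A i j * lam i = 0) ∧
  (∑ i, y i * lam i = 0) ∧
  (∀ i, u i + A.mulVec w i + b * y i = 1) ∧
  (∀ i, (0 < u i - γ * lam i ∧ u i - γ * lam i ≤ Real.sqrt (2 * γ * C)) →
      u i = 0) ∧
  (∀ i, ¬(0 < u i - γ * lam i ∧ u i - γ * lam i ≤ Real.sqrt (2 * γ * C)) →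
      u i = u i - γ * lam i)

namespace IsPStationary

variable {m n : ℕ} {A : Matrix (Fin m) (Fin n) ℝ} {y : Fin m → ℝ} {C γ : ℝ}
  {w : Fin n → ℝ} {b : ℝ} {u lam : Fin m → ℝ}

theorem eq_neg_sum (h : IsPStationary A y C γ w b u lam) (j : Fin n) :
    w j = -∑ i, A i j * lam i :=
  eq_neg_of_add_eq_zero_left (h.1 j)

theorem multiplier_eq_zero (h : IsPStationary A y C γ w b u lam) (hγ : γ ≠ 0) {i : Fin m}
    (hi : ¬(0 < u i - γ * lam i ∧ u i - γ * lam i ≤ Real.sqrt (2 * γ * C))) :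
    lam i = 0 := by
  have hprod : γ * lam i = 0 := by linarith [h.2.2.2.2 i hi]
  exact (mul_eq_zero.mp hprod).resolve_left hγ

end IsPStationary

theorem PStationary_support_vector_representation_general {m n : ℕ}
    (x : Fin m → Fin n → ℝ) (y : Fin m → ℝ)
    (A : Matrix (Fin m) (Fin n) ℝ) (hA : ∀ i j, A i j = y i * x i j)
    (C : ℝ) (γ : ℝ) (hγ : 0 < γ)
    (wstar : Fin n → ℝ) (bstar : ℝ) (ustar : Fin m → ℝ) (lam : Fin m → ℝ)
    (hstat : IsPStationary A y C γ wstar bstar ustar lam)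
    (Tstar : Set (Fin m))
    (hT : Tstar = {i | 0 < ustar i - γ * lam i ∧
        ustar i - γ * lam i ≤ Real.sqrt (2 * γ * C)}) :
    ∀ j, wstar j =
      ∑ i, Set.indicator Tstar (fun i => (-lam i) * y i * x i j) i := by
  intro j
  rw [hstat.eq_neg_sum j, ← sum_neg_distrib]
  refine sum_congr rfl fun i _ => ?_
  by_cases hi : i ∈ Tstar
  · rw [Set.indicator_of_mem hi, hA]
    ring
  · rw [Set.indicator_of_notMem hi, hstat.multiplier_eq_zero hγ.ne' (by simpa [hT] using hi)]
    simp

/-- support-vector representation of `w*` at a P-stationary point: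
`w* = Σ_{i ∈ T*} (−λ*_i) y_i x_i`. -/
theorem PStationary_support_vector_representation {m n : ℕ}
    (x : Fin m → Fin n → ℝ) (y : Fin m → ℝ) (hy : ∀ i, y i = 1 ∨ y i = -1)
    (A : Matrix (Fin m) (Fin n) ℝ) (hA : ∀ i j, A i j = y i * x i j)
    (C : ℝ) (hC : 0 < C) (γ : ℝ) (hγ : 0 < γ)
    (wstar : Fin n → ℝ) (bstar : ℝ) (ustar : Fin m → ℝ) (lam : Fin m → ℝ)
    (hstat : IsPStationary A y C γ wstar bstar ustar lam)
    (Tstar : Set (Fin m))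
    (hT : Tstar = {i | 0 < ustar i - γ * lam i ∧
        ustar i - γ * lam i ≤ Real.sqrt (2 * γ * C)}) :
    ∀ j, wstar j =
      ∑ i, Set.indicator Tstar (fun i => (-lam i) * y i * x i j) i :=
  PStationary_support_vector_representation_general x y A hA C γ hγ wstar bstar ustar lam hstat
    Tstar hT
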